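/- Let s ∈ ℂ with Re(s) > 0, let R > 0, let L < L* be real numbers, and let σ : [L, L*] → ℝ be continuous with σ ≥ 0 on [L, L*] and σ > 0 on the open interval (L, L*). Define F : [L, L*] → ℝ by F(x) = |exp(−R√(s²+1) ∫_L^x σ(ρ) dρ)|, where √ is the principal branch of the complex square root. Then F(L) = 1 and F is strictly decreasing on [L, L*]; i.e., the PML-II damping factor strictly attenuates the modal solution throughout the absorbing layer. -/

import Mathlib

/-!
For `Re s > 0` the number `s² + 1` lies off the branch cut `(-∞, 0]`, so `√(s² + 1)` has positive
real part. Hence the damping factor is `exp (-R Re √(s² + 1) ∫_L^x σ)`, and the primitive of `σ` is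
strictly increasing because `σ > 0` in the interior of the layer.
-/

open MeasureTheory Set

namespace Complex

lemma sq_add_one_mem_slitPlane {s : ℂ} (hs : s.re ≠ 0) : s ^ 2 + 1 ∈ slitPlane := by
  rw [mem_slitPlane_iff]
  by_cases him : s.im = 0
  · left
    simp only [add_re, one_re, sq, mul_re, him, mul_zero, sub_zero]
    nlinarith [mul_self_nonneg s.re]
  · right
    rw [add_im, one_im, add_zero, sq, mul_im, mul_comm s.im, ← two_mul]
    exact mul_ne_zero two_ne_zero (mul_ne_zero hs him)

lemma re_cpow_inv_two_pos {z : ℂ} (hz : z ∈ slitPlane) : 0 < (z ^ (2⁻¹ : ℂ)).re := by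
  rw [cpow_inv_two_re, Real.sqrt_pos]
  rcases mem_slitPlane_iff.mp hz with hre | him
  · positivity
  · linarith [neg_abs_le z.re, abs_re_lt_norm.mpr him]

lemma norm_exp_neg_mul_ofReal (c : ℂ) (t : ℝ) : ‖exp (-c * t)‖ = Real.exp (-(c.re * t)) := by
  rw [norm_exp, neg_mul, neg_re, re_mul_ofReal]

lemma strictAntiOn_norm_exp_neg_mul_comp {c : ℂ} (hc : 0 < c.re) {f : ℝ → ℝ} {S : Set ℝ}
    (hf : StrictMonoOn f S) : StrictAntiOn (fun x => ‖exp (-c * f x)‖) S := by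
  intro x hx y hy hxy
  simp only [norm_exp_neg_mul_ofReal]
  exact Real.exp_lt_exp.mpr (neg_lt_neg (mul_lt_mul_of_pos_left (hf hx hy hxy) hc))

end Complex

lemma strictMonoOn_integral_of_pos {f : ℝ → ℝ} {a b : ℝ} (hf : ContinuousOn f (Icc a b))
    (hpos : ∀ x ∈ Ioo a b, 0 < f x) : StrictMonoOn (fun x => ∫ t in a..x, f t) (Icc a b) := by
  intro x hx y hy hxy
  have hint : ∀ {u v}, u ∈ Icc a b → v ∈ Icc a b → IntervalIntegrable f volume u v :=
    fun hu hv => (hf.mono (uIcc_subset_Icc hu hv)).intervalIntegrable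
  have ha : a ∈ Icc a b := left_mem_Icc.mpr (hx.1.trans hx.2)
  have hxy_pos : 0 < ∫ t in x..y, f t :=
    intervalIntegral.intervalIntegral_pos_of_pos_on (hint hx hy)
      (fun t ht => hpos t ⟨hx.1.trans_lt ht.1, ht.2.trans_le hy.2⟩) hxy
  rw [← intervalIntegral.integral_interval_sub_left (hint ha hy) (hint ha hx)] at hxy_pos
  exact sub_pos.mp hxy_pos

theorem pml2_damping_strictly_decreasing_general (s : ℂ) (hs : 0 < s.re) (R : ℝ) (hR : 0 < R)
    (L Lstar : ℝ)
    (σ : ℝ → ℝ) (hσcont : ContinuousOn σ (Set.Icc L Lstar))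
    (hσpos : ∀ x ∈ Set.Ioo L Lstar, 0 < σ x) :
    (‖Complex.exp
        (-(R : ℂ) * (s ^ 2 + 1) ^ (1/2 : ℂ) * ((∫ ρ in L..L, σ ρ : ℝ) : ℂ))‖ = 1) ∧
      StrictAntiOn (fun x : ℝ =>
          ‖Complex.exp
            (-(R : ℂ) * (s ^ 2 + 1) ^ (1/2 : ℂ) * ((∫ ρ in L..x, σ ρ : ℝ) : ℂ))‖)
        (Set.Icc L Lstar) := by
  refine ⟨by simp, ?_⟩
  have hsqrt : 0 < ((s ^ 2 + 1) ^ (1/2 : ℂ)).re := by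
    rw [one_div]
    exact Complex.re_cpow_inv_two_pos (Complex.sq_add_one_mem_slitPlane hs.ne')
  have hc : 0 < ((R : ℂ) * (s ^ 2 + 1) ^ (1/2 : ℂ)).re := by
    rw [Complex.re_ofReal_mul]
    exact mul_pos hR hsqrt
  simpa only [neg_mul] using
    Complex.strictAntiOn_norm_exp_neg_mul_comp hc (strictMonoOn_integral_of_pos hσcont hσpos)

/-- The PML-II damping factor `F(x) = |exp(−R√(s²+1)∫_L^x σ)|` equals `1` at the interface
`x = L` and is strictly decreasing across the absorbing layer `[L, L*]`. -/
theorem pml2_damping_strictly_decreasing (s : ℂ) (hs : 0 < s.re) (R : ℝ) (hR : 0 < R)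
    (L Lstar : ℝ) (hLL : L < Lstar)
    (σ : ℝ → ℝ) (hσcont : ContinuousOn σ (Set.Icc L Lstar))
    (hσnonneg : ∀ x ∈ Set.Icc L Lstar, 0 ≤ σ x)
    (hσpos : ∀ x ∈ Set.Ioo L Lstar, 0 < σ x) :
    (‖Complex.exp
        (-(R : ℂ) * (s ^ 2 + 1) ^ (1/2 : ℂ) * ((∫ ρ in L..L, σ ρ : ℝ) : ℂ))‖ = 1) ∧
      StrictAntiOn (fun x : ℝ =>
          ‖Complex.exp
            (-(R : ℂ) * (s ^ 2 + 1) ^ (1/2 : ℂ) * ((∫ ρ in L..x, σ ρ : ℝ) : ℂ))‖)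
        (Set.Icc L Lstar) :=
  pml2_damping_strictly_decreasing_general s hs R hR L Lstar σ hσcont hσpos
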